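/- Let $\ell$ be a nonnegative integer, and let $\Psi(u)$ be the $(\ell+1)\times(\ell+1)$ matrix with entries $\Psi_{jk}(u) = \frac{(2j+1)(-2i)^j k! j!}{(k+j+1)!} C_{k-j}^{j+1}(u)$ for $j \le k$ and $0$ otherwise. Let $C = \sum_{j=0}^\ell (2j+3) E_{jj}$ and $S_1 = \sum_{j=0}^{\ell-1} 2(j+1) E_{j,j+1}$. Then $2(1-u^2)\Psi'(u) - u\, C\, \Psi(u) = \Psi(u)(-u C + S_1)$ as an identity of matrix-valued polynomials. -/

import Mathlib

/-- Pochhammer symbol (rising factorial) over ℂ. -/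
noncomputable def poch (x : ℂ) (m : ℕ) : ℂ := ∏ i ∈ Finset.range m, (x + i)

/-- The Gegenbauer polynomial value `C_n^λ(u)` over ℂ. -/
noncomputable def gegenC (lam : ℂ) (n : ℕ) (u : ℂ) : ℂ :=
  ∑ m ∈ Finset.range (n / 2 + 1),
    (-1) ^ m * poch lam (n - m) /
      ((Nat.factorial m : ℂ) * (Nat.factorial (n - 2 * m) : ℂ)) * (2 * u) ^ (n - 2 * m)

lemma poch_succ (x : ℂ) (m : ℕ) : poch x (m+1) = poch x m * (x + m) := by
  simp [poch, Finset.prod_range_succ]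

lemma fact_ne (m : ℕ) : ((Nat.factorial m : ℂ)) ≠ 0 := by
  exact_mod_cast Nat.cast_ne_zero.mpr (Nat.factorial_ne_zero m)

lemma gegen_hasDeriv (lam : ℂ) (n : ℕ) (u : ℂ) :
    HasDerivAt (fun x => gegenC lam n x)
      (∑ m ∈ Finset.range (n / 2 + 1),
        (-1) ^ m * poch lam (n - m) /
          ((Nat.factorial m : ℂ) * (Nat.factorial (n - 2 * m) : ℂ)) *
          (((n - 2 * m : ℕ) : ℂ) * (2 * u) ^ (n - 2 * m - 1) * 2)) u := by
  apply HasDerivAt.fun_sum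
  intro m _
  have h1 : HasDerivAt (fun x : ℂ => 2 * x) 2 u := by
    simpa using (hasDerivAt_id u).const_mul (2:ℂ)
  have h2 := h1.pow (n - 2 * m)
  exact h2.const_mul _

lemma coeff_id (lam : ℂ) (n m : ℕ) (hm : 2*m ≤ n) :
    2*((n+1-2*m : ℕ):ℂ) * ((-1)^m * poch lam (n+1-m) /
        ((Nat.factorial m : ℂ) * (Nat.factorial (n+1-2*m) : ℂ))) +
      (if 2*m < n then ((m:ℂ)+1) * ((-1)^(m+1) * poch lam (n+1-(m+1)) /
        ((Nat.factorial (m+1) : ℂ) * (Nat.factorial (n+1-2*(m+1)) : ℂ))) else 0)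
    = ((n:ℂ) + 2*lam) * ((-1)^m * poch lam (n-m) /
        ((Nat.factorial m : ℂ) * (Nat.factorial (n-2*m) : ℂ))) := by
  rcases lt_or_eq_of_le hm with h | h
  · obtain ⟨t, ht⟩ : ∃ t, n = 2*m + t + 1 := ⟨n - 2*m - 1, by omega⟩
    subst ht
    rw [if_pos h]
    have e1 : 2*m+t+1+1-m = (m+t+1)+1 := by omega
    have e2 : 2*m+t+1+1-2*m = (t+1)+1 := by omega
    have e3 : 2*m+t+1-m = m+t+1 := by omega
    have e4 : 2*m+t+1-2*m = t+1 := by omega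
    have e5 : 2*m+t+1+1-(m+1) = m+t+1 := by omega
    have e6 : 2*m+t+1+1-2*(m+1) = t := by omega
    rw [e1, e2, e3, e4, e5, e6, poch_succ]
    have f1 : (Nat.factorial ((t+1)+1) : ℂ) = ((t:ℂ)+2) * ((t:ℂ)+1) * (Nat.factorial t : ℂ) := by
      rw [Nat.factorial_succ, Nat.factorial_succ]; push_cast; ring
    have f2 : (Nat.factorial (t+1) : ℂ) = ((t:ℂ)+1) * (Nat.factorial t : ℂ) := by
      rw [Nat.factorial_succ]; push_cast; ring
    have f3 : (Nat.factorial (m+1) : ℂ) = ((m:ℂ)+1) * (Nat.factorial m : ℂ) := by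
      rw [Nat.factorial_succ]; push_cast; ring
    rw [f1, f2, f3]
    have hm1 : ((m:ℂ)+1) ≠ 0 := Nat.cast_add_one_ne_zero m
    have ht1 : ((t:ℂ)+1) ≠ 0 := Nat.cast_add_one_ne_zero t
    have ht2 : ((t:ℂ)+2) ≠ 0 := by
      have h2 : ((t:ℂ)+2) = ((t+2:ℕ):ℂ) := by push_cast; ring
      rw [h2]; exact Nat.cast_ne_zero.mpr (by omega)
    have hM := fact_ne m
    have hT := fact_ne t
    push_cast
    generalize (Nat.factorial m : ℂ) = M at hM ⊢
    generalize (Nat.factorial t : ℂ) = T at hT ⊢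
    generalize poch lam (m+t+1) = P
    have hd1 : M * ((↑t+2) * (↑t+1) * T) ≠ 0 :=
      mul_ne_zero hM (mul_ne_zero (mul_ne_zero ht2 ht1) hT)
    have hd2 : ((↑m:ℂ)+1) * M * T ≠ 0 := mul_ne_zero (mul_ne_zero hm1 hM) hT
    have hd3 : M * ((↑t+1) * T) ≠ 0 := mul_ne_zero hM (mul_ne_zero ht1 hT)
    rw [← mul_div_assoc, ← mul_div_assoc, ← mul_div_assoc,
      div_add_div _ _ hd1 hd2, div_eq_div_iff (mul_ne_zero hd1 hd2) hd3]
    ring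
  · rw [if_neg (by omega)]
    have e1 : n+1-2*m = 1 := by omega
    have e2 : n+1-m = m+1 := by omega
    have e3 : n-m = m := by omega
    have e4 : n-2*m = 0 := by omega
    rw [e1, e2, e3, e4, poch_succ]
    have hn : (n:ℂ) = 2*m := by exact_mod_cast congrArg (Nat.cast : ℕ → ℂ) h.symm
    rw [hn]
    simp [Nat.factorial]
    ring

lemma gegen_id (lam : ℂ) (n : ℕ) (u : ℂ) :
    (1 - u^2) * deriv (fun x => gegenC lam (n+1) x) u
      = -((n:ℂ)+1) * u * gegenC lam (n+1) u + ((n:ℂ) + 2*lam) * gegenC lam n u := by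
  rw [(gegen_hasDeriv lam (n+1) u).deriv]
  unfold gegenC
  rw [Finset.mul_sum, Finset.mul_sum, Finset.mul_sum, ← sub_eq_iff_eq_add',
    ← Finset.sum_sub_distrib]
  have hsub : Finset.range (n/2+1) ⊆ Finset.range ((n+1)/2+1) :=
    Finset.range_subset_range.mpr (by omega)
  have hsub2 : Finset.range ((n+1)/2) ⊆ Finset.range (n/2+1) :=
    Finset.range_subset_range.mpr (by omega)
  calc
    ∑ m ∈ Finset.range ((n+1)/2+1),
        ((1 - u^2) * ((-1) ^ m * poch lam (n+1 - m) /
            ((Nat.factorial m : ℂ) * (Nat.factorial (n+1 - 2 * m) : ℂ)) *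
            (((n+1 - 2 * m : ℕ) : ℂ) * (2 * u) ^ (n+1 - 2 * m - 1) * 2))
          - -((n:ℂ)+1) * u * ((-1) ^ m * poch lam (n+1 - m) /
            ((Nat.factorial m : ℂ) * (Nat.factorial (n+1 - 2 * m) : ℂ)) *
            (2 * u) ^ (n+1 - 2 * m)))
      = ∑ m ∈ Finset.range ((n+1)/2+1),
          (2 * ((n+1 - 2 * m : ℕ) : ℂ) * ((-1) ^ m * poch lam (n+1 - m) /
              ((Nat.factorial m : ℂ) * (Nat.factorial (n+1 - 2 * m) : ℂ))) *
              (2 * u) ^ (n - 2 * m)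
            + (m : ℂ) * ((-1) ^ m * poch lam (n+1 - m) /
              ((Nat.factorial m : ℂ) * (Nat.factorial (n+1 - 2 * m) : ℂ))) *
              (2 * u) ^ (n + 2 - 2 * m)) := by
        apply Finset.sum_congr rfl
        intro m hm
        simp only [Finset.mem_range] at hm
        generalize (-1:ℂ) ^ m * poch lam (n+1 - m) /
            ((Nat.factorial m : ℂ) * (Nat.factorial (n+1 - 2 * m) : ℂ)) = A
        rcases le_or_gt (2*m) n with h2 | h2
        · have e2 : n+1-2*m-1 = n-2*m := by omega
          have e1 : n+1-2*m = (n-2*m)+1 := by omega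
          have e3 : n+2-2*m = (n-2*m)+1+1 := by omega
          rw [e2, e1, e3]
          have hp : ((n - 2*m : ℕ) : ℂ) = (n:ℂ) - 2*m := by
            rw [Nat.cast_sub h2]; push_cast; ring
          simp only [pow_succ]
          push_cast
          rw [hp]
          ring
        · have h2' : 2*m = n+1 := by omega
          have e1 : n+1-2*m = 0 := by omega
          have e2 : n+1-2*m-1 = 0 := by omega
          have e3 : n-2*m = 0 := by omega
          have e4 : n+2-2*m = 1 := by omega
          rw [e2, e1, e3, e4]
          have hn : (n:ℂ)+1 = 2*m := by exact_mod_cast congrArg (Nat.cast : ℕ → ℂ) h2'.symm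
          simp only [Nat.cast_zero]
          rw [pow_one, pow_zero]
          linear_combination u * A * hn
    _ = ∑ m ∈ Finset.range (n/2+1),
          (2 * ((n+1 - 2 * m : ℕ) : ℂ) * ((-1) ^ m * poch lam (n+1 - m) /
              ((Nat.factorial m : ℂ) * (Nat.factorial (n+1 - 2 * m) : ℂ))) *
              (2 * u) ^ (n - 2 * m)
            + (if 2*m < n then
                ((m:ℂ)+1) * ((-1) ^ (m+1) * poch lam (n+1 - (m+1)) /
                  ((Nat.factorial (m+1) : ℂ) * (Nat.factorial (n+1 - 2 * (m+1)) : ℂ))) *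
                  (2 * u) ^ (n - 2 * m)
              else 0)) := by
        rw [Finset.sum_add_distrib, Finset.sum_add_distrib]
        congr 1
        · rw [← Finset.sum_subset hsub]
          intro m hm hnm
          simp only [Finset.mem_range] at hm hnm
          have : n+1-2*m = 0 := by omega
          rw [this]
          simp
        · rw [Finset.sum_range_succ' _ ((n+1)/2)]
          simp only [Nat.cast_zero, zero_mul]
          rw [add_zero, ← Finset.sum_subset hsub2]
          · apply Finset.sum_congr rfl
            intro m hm
            simp only [Finset.mem_range] at hm
            rw [if_pos (by omega)]
            have e : n + 2 - 2 * (m+1) = n - 2*m := by omega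
            rw [e]
            push_cast
            ring
          · intro m hm hnm
            simp only [Finset.mem_range] at hm hnm
            rw [if_neg (by omega)]
    _ = ∑ m ∈ Finset.range (n/2+1),
          ((n:ℂ) + 2*lam) * ((-1) ^ m * poch lam (n - m) /
            ((Nat.factorial m : ℂ) * (Nat.factorial (n - 2 * m) : ℂ)) *
            (2 * u) ^ (n - 2 * m)) := by
        apply Finset.sum_congr rfl
        intro m hm
        simp only [Finset.mem_range] at hm
        have h2 : 2*m ≤ n := by omega
        have hc := coeff_id lam n m h2
        split_ifs at hc ⊢ with hlt
        · linear_combination (2*u) ^ (n - 2*m) * hc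
        · linear_combination (2*u) ^ (n - 2*m) * hc

lemma gegen_zero (lam : ℂ) (x : ℂ) : gegenC lam 0 x = 1 := by
  simp [gegenC, poch]

noncomputable def psiEnt (j k : ℕ) (u : ℂ) : ℂ :=
  if j ≤ k then
    (2 * (j : ℂ) + 1) * (-2 * Complex.I) ^ j *
      (Nat.factorial k : ℂ) * (Nat.factorial j : ℂ) /
      (Nat.factorial (k + j + 1) : ℂ) *
      gegenC ((j : ℂ) + 1) (k - j) u
  else 0

lemma scalar_id (u : ℂ) (j k : ℕ) :
    2*(1-u^2) * deriv (fun x => psiEnt j k x) u - u * ((2*(j:ℂ)+3) * psiEnt j k u)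
      = -(u * (psiEnt j k u * (2*(k:ℂ)+3)))
        + (if 1 ≤ k then psiEnt j (k-1) u * (2*(k:ℂ)) else 0) := by
  rcases lt_or_ge k j with h | h
  · have h1 : ¬ j ≤ k := by omega
    have h2 : ¬ j ≤ k - 1 := by omega
    simp [psiEnt, h1, h2]
  · rcases eq_or_lt_of_le h with rfl | hlt
    · -- j = k
      have h2 : ¬ j ≤ j - 1 ∨ j = 0 := by omega
      simp only [psiEnt, le_refl, if_true, Nat.sub_self]
      have hder : (fun x => (2 * (j : ℂ) + 1) * (-2 * Complex.I) ^ j *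
          (Nat.factorial j : ℂ) * (Nat.factorial j : ℂ) /
          (Nat.factorial (j + j + 1) : ℂ) * gegenC ((j : ℂ) + 1) 0 x)
          = fun _ : ℂ => (2 * (j : ℂ) + 1) * (-2 * Complex.I) ^ j *
          (Nat.factorial j : ℂ) * (Nat.factorial j : ℂ) /
          (Nat.factorial (j + j + 1) : ℂ) := by
        funext x; rw [gegen_zero, mul_one]
      rw [hder, deriv_const]
      rcases Nat.eq_zero_or_pos j with rfl | hj
      · simp [gegen_zero]
      · rw [if_pos (show 1 ≤ j from hj), if_neg (show ¬ j ≤ j - 1 by omega)]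
        rw [gegen_zero]
        ring
    · -- j < k
      obtain ⟨d, rfl⟩ : ∃ d, k = j + d + 1 := ⟨k - j - 1, by omega⟩
      have e1 : j + d + 1 - j = d + 1 := by omega
      have e2 : j + d + 1 - 1 = j + d := by omega
      have e3 : j + d - j = d := by omega
      have e4 : j + d + 1 + j + 1 = (2*j + d + 1) + 1 := by omega
      have e5 : j + d + j + 1 = 2*j + d + 1 := by omega
      rw [if_pos (by omega)]
      simp only [psiEnt, if_pos (show j ≤ j + d + 1 by omega),
        if_pos (show j ≤ j + d by omega), e1, e2, e3, e4, e5]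
      set lam : ℂ := (j : ℂ) + 1 with hlam
      set c : ℂ := (2 * (j : ℂ) + 1) * (-2 * Complex.I) ^ j *
          (Nat.factorial (j + d + 1) : ℂ) * (Nat.factorial j : ℂ) /
          (Nat.factorial ((2*j + d + 1) + 1) : ℂ) with hc
      set c' : ℂ := (2 * (j : ℂ) + 1) * (-2 * Complex.I) ^ j *
          (Nat.factorial (j + d) : ℂ) * (Nat.factorial j : ℂ) /
          (Nat.factorial (2*j + d + 1) : ℂ) with hc'
      have hdg := gegen_hasDeriv lam (d+1) u
      have hder : deriv (fun x => c * gegenC lam (d+1) x) u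
          = c * deriv (fun x => gegenC lam (d+1) x) u :=
        deriv_const_mul c hdg.differentiableAt
      rw [hder]
      have hG := gegen_id lam d u
      have hD1 : (Nat.factorial (2*j+d+1) : ℂ) ≠ 0 := fact_ne _
      have h2jd : (2*(j:ℂ)+(d:ℂ)+2) ≠ 0 := by
        have h0 : ((2*j+d+2 : ℕ):ℂ) ≠ 0 := Nat.cast_ne_zero.mpr (by omega)
        push_cast at h0
        intro hz; exact h0 (by linear_combination hz)
      have hfac : (Nat.factorial ((2*j+d+1)+1) : ℂ)
          = (2*(j:ℂ)+(d:ℂ)+2) * (Nat.factorial (2*j+d+1) : ℂ) := by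
        rw [Nat.factorial_succ]; push_cast; ring
      have hfac2 : (Nat.factorial (j+d+1) : ℂ)
          = ((j:ℂ)+(d:ℂ)+1) * (Nat.factorial (j+d) : ℂ) := by
        rw [Nat.factorial_succ]; push_cast; ring
      have hR : ((j:ℂ) + d + 1) * c' = ((d:ℂ) + 2 * lam) * c := by
        rw [hc, hc', hlam, hfac, hfac2]
        rw [← mul_div_assoc, ← mul_div_assoc,
          div_eq_div_iff hD1 (mul_ne_zero h2jd hD1)]
        ring
      push_cast
      push_cast at hG hR
      linear_combination 2 * c * hG - 2 * gegenC lam d u * hR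


/-- The matrix `Ψ(u)` with entries
`Ψ_{jk}(u) = ((2j+1)(-2i)^j k! j! / (k+j+1)!) C_{k-j}^{j+1}(u)` for `j ≤ k`, `0` otherwise. -/
noncomputable def Psi (ℓ : ℕ) (u : ℂ) : Matrix (Fin (ℓ + 1)) (Fin (ℓ + 1)) ℂ :=
  Matrix.of fun j k =>
    if (j : ℕ) ≤ (k : ℕ) then
      (2 * ((j : ℕ) : ℂ) + 1) * (-2 * Complex.I) ^ (j : ℕ) *
        (Nat.factorial (k : ℕ) : ℂ) * (Nat.factorial (j : ℕ) : ℂ) /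
        (Nat.factorial ((k : ℕ) + (j : ℕ) + 1) : ℂ) *
        gegenC (((j : ℕ) : ℂ) + 1) ((k : ℕ) - (j : ℕ)) u
    else 0

/-- `2(1-u²) Ψ'(u) - u C Ψ(u) = Ψ(u)(-uC + S₁)`, where `C = ∑ (2j+3) E_{jj}` and
`S₁ = ∑_{j=0}^{ℓ-1} 2(j+1) E_{j,j+1}`, and `Ψ'` is the entrywise derivative. -/

lemma Psi_eq_psiEnt (ℓ : ℕ) (u : ℂ) (j k : Fin (ℓ + 1)) :
    Psi ℓ u j k = psiEnt (j : ℕ) (k : ℕ) u := rfl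

lemma S1sum (ℓ : ℕ) (u : ℂ) (j k : Fin (ℓ + 1)) :
    ∑ l : Fin (ℓ+1), Psi ℓ u j l * (if (k:ℕ) = (l:ℕ)+1 then 2*(((l:ℕ):ℂ)+1) else 0)
      = if 1 ≤ (k:ℕ) then psiEnt (j:ℕ) ((k:ℕ)-1) u * (2*(((k:ℕ)):ℂ)) else 0 := by
  rcases k with ⟨kv, hk⟩
  cases kv with
  | zero => simp
  | succ kk =>
      simp only [Fin.val_mk]
      rw [if_pos (by omega)]
      rw [Finset.sum_eq_single (⟨kk, Nat.lt_of_succ_lt hk⟩ : Fin (ℓ+1))]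
      · rw [Psi_eq_psiEnt, if_pos rfl]
        push_cast
        ring_nf
      · intro b _ hb
        rw [if_neg, mul_zero]
        intro hcond
        refine hb (Fin.ext ?_)
        simp only [Fin.val_mk] at hcond ⊢
        omega
      · intro h; exact absurd (Finset.mem_univ _) h


theorem Psi_first_order_identity (ℓ : ℕ)
    (Cm S1 : Matrix (Fin (ℓ + 1)) (Fin (ℓ + 1)) ℂ)
    (hC : Cm = Matrix.diagonal fun j : Fin (ℓ + 1) => 2 * ((j : ℕ) : ℂ) + 3)
    (hS : S1 = Matrix.of fun j k : Fin (ℓ + 1) =>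
      if (k : ℕ) = (j : ℕ) + 1 then 2 * (((j : ℕ) : ℂ) + 1) else 0) :
    ∀ u : ℂ,
      (2 * (1 - u ^ 2)) • Matrix.of (fun j k => deriv (fun x => Psi ℓ x j k) u)
          - u • (Cm * Psi ℓ u) =
        Psi ℓ u * (-(u • Cm) + S1) := by
  intro u
  subst hC hS
  rw [Matrix.mul_add, Matrix.mul_neg, Matrix.mul_smul]
  ext j k
  simp only [Matrix.sub_apply, Matrix.smul_apply, smul_eq_mul, Matrix.add_apply,
    Matrix.neg_apply, Matrix.diagonal_mul, Matrix.mul_diagonal]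
  rw [Matrix.mul_apply]
  simp only [Matrix.of_apply]
  rw [S1sum]
  have hder : (fun x => Psi ℓ x j k) = fun x => psiEnt (j:ℕ) (k:ℕ) x := rfl
  rw [hder]
  simp only [Psi_eq_psiEnt]
  have := scalar_id u (j:ℕ) (k:ℕ)
  linear_combination this
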